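/- Let 0 < a < 1 and b a natural number with a·b ≥ 1. For every ε > 0 and every natural number n ≥ 1, the covering number of the unit ball B_W of the RKHS of the Weierstrass fractal kernel in C([−1,1]) satisfies 𝒞(ε, B_W) ≥ a^{n²/2} / (2ε²)^n. -/

import Mathlib

/-!
A finite block `∑_{k<n} a^{k/2} (c_k cos (bᵏπx) + d_k sin (bᵏπx))` with `(c, d)` in the Euclidean
unit ball of `ℝ²ⁿ` lies in `B_W`. Since `a < 1 ≤ ab` forces `b ≥ 2`, the frequencies `bᵏ` are
distinct and the `2n` functions `cos (bᵏπx)`, `sin (bᵏπx)` are orthonormal in `L²[-1,1]`; taking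
inner products against them is a `√2`-Lipschitz map `C([-1,1]) → ℝ²ⁿ` (Bessel's inequality and
`‖g‖₂ ≤ √2 ‖g‖_∞`) that maps these blocks onto the ellipsoid with semi-axes `a^{k/2}`, each taken
twice. An `ε`-cover of `B_W` by `N` balls therefore covers the ellipsoid by `N` balls of radius
`√2 ε`, and comparing volumes gives `N (2ε²)ⁿ ≥ ∏_{k<n} aᵏ = a^{n(n-1)/2} ≥ a^{n²/2}`.
-/

open Real Metric
open scoped ENNReal

/-- The covering number of a set `A` in a metric space: the minimal number (in `ℕ∞`) of balls
of radius `ε` needed to cover `A`. -/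
noncomputable def coveringNumber {X : Type*} [PseudoMetricSpace X] (ε : ℝ) (A : Set X) : ℕ∞ :=
  sInf {n : ℕ∞ | ∃ t : Finset X, (t.card : ℕ∞) = n ∧ A ⊆ ⋃ c ∈ t, Metric.closedBall c ε}

/-- The image in `C([-1,1])` of the unit ball of the RKHS of the Weierstrass fractal kernel:
continuous functions `f(x) = ∑ₙ a^(n/2)(cₙ cos(bⁿπx) + dₙ sin(bⁿπx))` with square-summable
coefficients satisfying `∑ₙ (cₙ² + dₙ²) ≤ 1`. -/
def weierstrassBall (a : ℝ) (b : ℕ) : Set C(Set.Icc (-1 : ℝ) 1, ℝ) :=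
  {f | ∃ c d : ℕ → ℝ, Summable (fun n => c n ^ 2 + d n ^ 2) ∧
    (∑' n : ℕ, (c n ^ 2 + d n ^ 2)) ≤ 1 ∧
    ∀ x : Set.Icc (-1 : ℝ) 1, f x = ∑' n : ℕ, a ^ ((n : ℝ) / 2) *
      (c n * Real.cos ((b : ℝ) ^ n * π * (x : ℝ)) +
        d n * Real.sin ((b : ℝ) ^ n * π * (x : ℝ)))}

open MeasureTheory Module Set
open scoped NNReal

section CoveringNumber

-- `open Metric` also brings Mathlib's `Metric.coveringNumber` into scope, hence `_root_` below.
variable {X : Type*} [PseudoMetricSpace X]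

theorem le_coveringNumber_of_forall_cover {ε : ℝ} {A : Set X} {r : ℝ≥0∞}
    (h : ∀ t : Finset X, A ⊆ ⋃ c ∈ t, closedBall c ε → r ≤ t.card) :
    r ≤ _root_.coveringNumber ε A := by
  set S := {n : ℕ∞ | ∃ t : Finset X, (t.card : ℕ∞) = n ∧ A ⊆ ⋃ c ∈ t, closedBall c ε}
  rcases S.eq_empty_or_nonempty with hS | hS
  · simp [_root_.coveringNumber, S, hS]
  · obtain ⟨t, ht, hcover⟩ := csInf_mem hS
    rw [_root_.coveringNumber, ← ht]
    exact h t hcover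

variable {E : Type*} [NormedAddCommGroup E] [NormedSpace ℝ E] [FiniteDimensional ℝ E]
  {A : Set X} {L : X → E} {K : ℝ≥0} {T : E →ₗ[ℝ] E} {ε : ℝ}

theorem ofReal_abs_det_le_card_mul (hL : LipschitzWith K L) (hT : T '' closedBall 0 1 ⊆ L '' A)
    (hε : 0 ≤ ε) {t : Finset X} (ht : A ⊆ ⋃ c ∈ t, closedBall c ε) :
    ENNReal.ofReal |LinearMap.det T| ≤ t.card * ENNReal.ofReal ((K * ε) ^ finrank ℝ E) := by
  borelize E
  let μ : Measure E := Measure.addHaar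
  have hcover : T '' closedBall 0 1 ⊆ ⋃ c ∈ t, closedBall (L c) (K * ε) := by
    refine hT.trans ?_
    rintro _ ⟨x, hx, rfl⟩
    obtain ⟨c, hc, hxc⟩ := mem_iUnion₂.mp (ht hx)
    exact mem_iUnion₂.mpr ⟨c, hc, (hL.dist_le_mul x c).trans (by gcongr; exact hxc)⟩
  have hball_ne_zero : μ (closedBall 0 1) ≠ 0 := (measure_closedBall_pos μ 0 one_pos).ne'
  have hball_ne_top : μ (closedBall 0 1) ≠ ⊤ := measure_closedBall_lt_top.ne
  refine (ENNReal.mul_le_mul_iff_left hball_ne_zero hball_ne_top).mp ?_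
  calc ENNReal.ofReal |LinearMap.det T| * μ (closedBall 0 1) = μ (T '' closedBall 0 1) :=
        (Measure.addHaar_image_linearMap μ T _).symm
    _ ≤ μ (⋃ c ∈ t, closedBall (L c) (K * ε)) := measure_mono hcover
    _ ≤ ∑ c ∈ t, μ (closedBall (L c) (K * ε)) := measure_biUnion_finset_le _ _
    _ = t.card * ENNReal.ofReal ((K * ε) ^ finrank ℝ E) * μ (closedBall 0 1) := by
        simp [Measure.addHaar_closedBall' μ _ (by positivity : (0 : ℝ) ≤ K * ε), mul_assoc]

theorem ofReal_abs_det_div_le_coveringNumber (hL : LipschitzWith K L)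
    (hT : T '' closedBall 0 1 ⊆ L '' A) (hε : 0 ≤ ε) :
    ENNReal.ofReal (|LinearMap.det T| / (K * ε) ^ finrank ℝ E) ≤ _root_.coveringNumber ε A := by
  refine le_coveringNumber_of_forall_cover fun t ht => ?_
  rcases (pow_nonneg (by positivity) _ : (0 : ℝ) ≤ (K * ε) ^ finrank ℝ E).eq_or_lt with h0 | hpos
  · simp [← h0]
  · rw [ENNReal.ofReal_div_of_pos hpos]
    exact ENNReal.div_le_of_le_mul (ofReal_abs_det_le_card_mul hL hT hε ht)

end CoveringNumber

theorem Matrix.det_toEuclideanLin {𝕜 ι : Type*} [RCLike 𝕜] [Fintype ι] [DecidableEq ι]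
    (A : Matrix ι ι 𝕜) : LinearMap.det (Matrix.toEuclideanLin A) = A.det := by
  rw [Matrix.toEuclideanLin_eq_toLin_orthonormal, LinearMap.det_toLin]

section InnerCoeffs

variable {ι H : Type*} [NormedAddCommGroup H] [InnerProductSpace ℝ H]

noncomputable def innerCoeffs (e : ι → H) : H →L[ℝ] EuclideanSpace ℝ ι :=
  (EuclideanSpace.equiv ι ℝ).symm.toContinuousLinearMap ∘L
    ContinuousLinearMap.pi fun i => innerSL ℝ (e i)

@[simp]
theorem innerCoeffs_apply (e : ι → H) (x : H) (i : ι) : innerCoeffs e x i = inner ℝ (e i) x :=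
  rfl

variable [Fintype ι] {e : ι → H}

theorem Orthonormal.opNorm_innerCoeffs_le (he : Orthonormal ℝ e) : ‖innerCoeffs e‖ ≤ 1 :=
  ContinuousLinearMap.opNorm_le_bound _ zero_le_one fun x => by
    rw [one_mul, ← sq_le_sq₀ (norm_nonneg _) (norm_nonneg _)]
    simpa [EuclideanSpace.norm_sq_eq] using he.sum_inner_products_le x (s := Finset.univ)

theorem Orthonormal.innerCoeffs_sum_smul (he : Orthonormal ℝ e) (c : ι → ℝ) :
    innerCoeffs e (∑ i, c i • e i) = WithLp.toLp 2 c := by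
  ext i
  rw [innerCoeffs_apply, he.inner_right_fintype]

end InnerCoeffs

section IntervalL2

/-- Restricting before pulling back to the subtype makes this a finite measure by instance, as
`ContinuousMap.toLp` requires. -/
noncomputable abbrev volumeIcc (u v : ℝ) : Measure (Icc u v) :=
  (volume.restrict (Icc u v)).comap Subtype.val

variable {u v : ℝ}

theorem integral_volumeIcc (huv : u ≤ v) (f : ℝ → ℝ) :
    ∫ x, f x ∂volumeIcc u v = ∫ x in u..v, f x := by
  rw [integral_subtype_comap measurableSet_Icc, Measure.restrict_restrict_of_subset subset_rfl,
    intervalIntegral.integral_of_le huv, integral_Icc_eq_integral_Ioc]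

theorem measureUnivNNReal_volumeIcc : measureUnivNNReal (volumeIcc u v) = (v - u).toNNReal := by
  rw [measureUnivNNReal, comap_subtype_coe_apply measurableSet_Icc, image_univ,
    Subtype.range_coe, Measure.restrict_apply_self, Real.volume_Icc]
  rfl

theorem norm_toLp_volumeIcc_le :
    ‖(ContinuousMap.toLp 2 (volumeIcc u v) ℝ : C(Icc u v, ℝ) →L[ℝ] _)‖ ≤ √(v - u) := by
  have h := ContinuousMap.toLp_norm_le (E := ℝ) (p := 2) (volumeIcc u v) (𝕜 := ℝ)
  rw [measureUnivNNReal_volumeIcc] at h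
  rw [Real.sqrt, NNReal.sqrt_eq_rpow]
  simpa using h

theorem inner_toLp_restrict_Icc (huv : u ≤ v) (f g : C(ℝ, ℝ)) :
    inner ℝ (ContinuousMap.toLp 2 (volumeIcc u v) ℝ (f.restrict (Icc u v)))
      (ContinuousMap.toLp 2 (volumeIcc u v) ℝ (g.restrict (Icc u v))) =
      ∫ x in u..v, f x * g x := by
  rw [ContinuousMap.inner_toLp]
  simp only [ContinuousMap.restrict_apply, conj_trivial]
  rw [integral_volumeIcc huv fun x => g x * f x]
  simp_rw [mul_comm]

end IntervalL2

section Trig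

theorem integral_cos_int_mul_pi_mul (k : ℤ) :
    ∫ x in (-1 : ℝ)..1, cos (k * π * x) = if k = 0 then 2 else 0 := by
  split_ifs with hk
  · norm_num [hk]
  · have hc : (k * π : ℝ) ≠ 0 := mul_ne_zero (by exact_mod_cast hk) pi_ne_zero
    simp [intervalIntegral.integral_comp_mul_left (fun x => cos x) hc, sin_int_mul_pi]

theorem integral_sin_mul (c : ℝ) : ∫ x in (-1 : ℝ)..1, sin (c * x) = 0 := by
  rcases eq_or_ne c 0 with rfl | hc
  · simp
  · simp [intervalIntegral.integral_comp_mul_left (fun x => sin x) hc]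

theorem integral_cos_nat_mul_pi_mul_cos (p q : ℕ) (hp : p ≠ 0) :
    ∫ x in (-1 : ℝ)..1, cos (p * π * x) * cos (q * π * x) = if p = q then 1 else 0 := by
  have h (x : ℝ) : cos (p * π * x) * cos (q * π * x) =
      (cos (((p - q : ℤ) : ℝ) * π * x) + cos (((p + q : ℤ) : ℝ) * π * x)) / 2 := by
    rw [show ((p - q : ℤ) : ℝ) * π * x = p * π * x - q * π * x by push_cast; ring,
      show ((p + q : ℤ) : ℝ) * π * x = p * π * x + q * π * x by push_cast; ring,
      ← two_mul_cos_mul_cos]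
    ring
  simp_rw [h]
  rw [intervalIntegral.integral_div, intervalIntegral.integral_add
    (Continuous.intervalIntegrable (by fun_prop) _ _)
    (Continuous.intervalIntegrable (by fun_prop) _ _),
    integral_cos_int_mul_pi_mul, integral_cos_int_mul_pi_mul]
  have : (p + q : ℤ) ≠ 0 := by omega
  split_ifs <;> first | omega | norm_num

theorem integral_sin_nat_mul_pi_mul_sin (p q : ℕ) (hp : p ≠ 0) :
    ∫ x in (-1 : ℝ)..1, sin (p * π * x) * sin (q * π * x) = if p = q then 1 else 0 := by
  have h (x : ℝ) : sin (p * π * x) * sin (q * π * x) =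
      (cos (((p - q : ℤ) : ℝ) * π * x) - cos (((p + q : ℤ) : ℝ) * π * x)) / 2 := by
    rw [show ((p - q : ℤ) : ℝ) * π * x = p * π * x - q * π * x by push_cast; ring,
      show ((p + q : ℤ) : ℝ) * π * x = p * π * x + q * π * x by push_cast; ring,
      ← two_mul_sin_mul_sin]
    ring
  simp_rw [h]
  rw [intervalIntegral.integral_div, intervalIntegral.integral_sub
    (Continuous.intervalIntegrable (by fun_prop) _ _)
    (Continuous.intervalIntegrable (by fun_prop) _ _),
    integral_cos_int_mul_pi_mul, integral_cos_int_mul_pi_mul]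
  have : (p + q : ℤ) ≠ 0 := by omega
  split_ifs <;> first | omega | norm_num

theorem integral_sin_mul_cos (c d : ℝ) :
    ∫ x in (-1 : ℝ)..1, sin (c * x) * cos (d * x) = 0 := by
  have h (x : ℝ) : sin (c * x) * cos (d * x) = (sin ((c - d) * x) + sin ((c + d) * x)) / 2 := by
    rw [sub_mul, add_mul, ← two_mul_sin_mul_cos]
    ring
  simp_rw [h]
  rw [intervalIntegral.integral_div, intervalIntegral.integral_add
    (Continuous.intervalIntegrable (by fun_prop) _ _)
    (Continuous.intervalIntegrable (by fun_prop) _ _),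
    integral_sin_mul, integral_sin_mul]
  norm_num

end Trig

section WeierstrassBlock

noncomputable def weierstrassTrig (b n : ℕ) : Fin n ⊕ Fin n → C(ℝ, ℝ)
  | .inl k => ⟨fun x => cos ((b : ℝ) ^ (k : ℕ) * π * x), by fun_prop⟩
  | .inr k => ⟨fun x => sin ((b : ℝ) ^ (k : ℕ) * π * x), by fun_prop⟩

noncomputable def weierstrassScale (a : ℝ) (n : ℕ) : Fin n ⊕ Fin n → ℝ :=
  Sum.elim (fun k => a ^ ((k : ℕ) / 2 : ℝ)) (fun k => a ^ ((k : ℕ) / 2 : ℝ))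

noncomputable def weierstrassBlock (a : ℝ) (b n : ℕ) (v : EuclideanSpace ℝ (Fin n ⊕ Fin n)) :
    C(Icc (-1 : ℝ) 1, ℝ) :=
  ∑ i, (weierstrassScale a n i * v i) • (weierstrassTrig b n i).restrict (Icc (-1) 1)

noncomputable def weierstrassCoeffs (b n : ℕ) :
    C(Icc (-1 : ℝ) 1, ℝ) →L[ℝ] EuclideanSpace ℝ (Fin n ⊕ Fin n) :=
  innerCoeffs (fun i => ContinuousMap.toLp 2 (volumeIcc (-1) 1) ℝ
    ((weierstrassTrig b n i).restrict (Icc (-1) 1))) ∘L ContinuousMap.toLp 2 (volumeIcc (-1) 1) ℝ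

variable {a : ℝ} {b n : ℕ}

theorem orthonormal_weierstrassTrig (hb : 2 ≤ b) :
    Orthonormal ℝ fun i =>
      ContinuousMap.toLp 2 (volumeIcc (-1) 1) ℝ ((weierstrassTrig b n i).restrict (Icc (-1) 1)) := by
  have hpow (k : ℕ) : b ^ k ≠ 0 := pow_ne_zero _ (by omega)
  have hinj (k l : Fin n) : b ^ (k : ℕ) = b ^ (l : ℕ) ↔ k = l :=
    (Nat.pow_right_injective hb).eq_iff.trans Fin.val_inj
  rw [orthonormal_iff_ite]
  rintro (k | k) (l | l) <;>
    simp only [inner_toLp_restrict_Icc (by norm_num : (-1 : ℝ) ≤ 1), weierstrassTrig,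
      ContinuousMap.coe_mk, Sum.inl.injEq, Sum.inr.injEq, reduceCtorEq, if_false]
  · simpa [hinj] using integral_cos_nat_mul_pi_mul_cos (b ^ (k : ℕ)) (b ^ (l : ℕ)) (hpow k)
  · simp_rw [mul_comm (cos _)]
    exact integral_sin_mul_cos _ _
  · exact integral_sin_mul_cos _ _
  · simpa [hinj] using integral_sin_nat_mul_pi_mul_sin (b ^ (k : ℕ)) (b ^ (l : ℕ)) (hpow k)

theorem lipschitzWith_weierstrassCoeffs (hb : 2 ≤ b) :
    LipschitzWith (NNReal.sqrt 2) (weierstrassCoeffs b n) := by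
  refine (weierstrassCoeffs b n).lipschitz.weaken ?_
  rw [← NNReal.coe_le_coe, coe_nnnorm, Real.coe_sqrt, NNReal.coe_ofNat]
  calc ‖weierstrassCoeffs b n‖ ≤ 1 * √(1 - -1) :=
        (ContinuousLinearMap.opNorm_comp_le _ _).trans <| mul_le_mul
          (orthonormal_weierstrassTrig hb).opNorm_innerCoeffs_le norm_toLp_volumeIcc_le
          (norm_nonneg _) zero_le_one
    _ = √2 := by norm_num

theorem weierstrassCoeffs_weierstrassBlock (hb : 2 ≤ b) (v : EuclideanSpace ℝ (Fin n ⊕ Fin n)) :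
    weierstrassCoeffs b n (weierstrassBlock a b n v) =
      Matrix.toEuclideanLin (Matrix.diagonal (weierstrassScale a n)) v := by
  simp only [weierstrassCoeffs, weierstrassBlock, ContinuousLinearMap.comp_apply,
    map_sum (ContinuousMap.toLp _ _ _), map_smul (ContinuousMap.toLp _ _ _),
    (orthonormal_weierstrassTrig hb).innerCoeffs_sum_smul]
  ext i
  simp [Matrix.toLpLin_apply, Matrix.mulVec_diagonal]

theorem rpow_sq_div_two_le_prod_weierstrassScale (ha0 : 0 < a) (ha1 : a ≤ 1) :
    a ^ ((n : ℝ) ^ 2 / 2) ≤ ∏ i, weierstrassScale a n i := by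
  have hgauss : ((∑ k ∈ Finset.range n, k : ℕ) : ℝ) * 2 ≤ (n : ℝ) ^ 2 := by
    rw [sq, ← Nat.cast_ofNat, ← Nat.cast_mul, Finset.sum_range_id_mul_two, ← Nat.cast_mul]
    exact_mod_cast Nat.mul_le_mul_left n (Nat.sub_le n 1)
  rw [Fintype.prod_sum_type]
  simp only [weierstrassScale, Sum.elim_inl, Sum.elim_inr, ← Real.rpow_sum_of_pos ha0,
    ← Real.rpow_add ha0]
  refine Real.rpow_le_rpow_of_exponent_ge ha0 ha1 ?_
  rw [← Finset.sum_div, Fin.sum_univ_eq_sum_range (fun k => (k : ℝ)) n]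
  push_cast at hgauss
  linarith

theorem mem_weierstrassBall_of_fin (c d : Fin n → ℝ)
    (hcd : ∑ k, (c k ^ 2 + d k ^ 2) ≤ 1) (f : C(Icc (-1 : ℝ) 1, ℝ))
    (hf : ∀ x : Icc (-1 : ℝ) 1, f x = ∑ k : Fin n, a ^ ((k : ℕ) / 2 : ℝ) *
      (c k * cos ((b : ℝ) ^ (k : ℕ) * π * x) + d k * sin ((b : ℝ) ^ (k : ℕ) * π * x))) :
    f ∈ weierstrassBall a b := by
  let c' : ℕ → ℝ := fun m => if h : m < n then c ⟨m, h⟩ else 0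
  let d' : ℕ → ℝ := fun m => if h : m < n then d ⟨m, h⟩ else 0
  have tsum_eq_sum_fin {F : ℕ → ℝ} (hF : ∀ m, n ≤ m → F m = 0) :
      ∑' m, F m = ∑ k : Fin n, F k := by
    rw [tsum_eq_sum (s := Finset.range n) (by simpa using hF), Finset.sum_range]
  have hvanish : ∀ m, n ≤ m → c' m = 0 ∧ d' m = 0 := fun m hm => by
    simp [c', d', Nat.not_lt.mpr hm]
  refine ⟨c', d', summable_of_ne_finset_zero (s := Finset.range n) fun m hm => ?_, ?_, fun x => ?_⟩
  · simp [hvanish m (by simpa using hm)]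
  · rw [tsum_eq_sum_fin fun m hm => by simp [hvanish m hm]]
    simpa [c', d'] using hcd
  · rw [hf, tsum_eq_sum_fin fun m hm => by simp [hvanish m hm]]
    simp [c', d']

theorem weierstrassBlock_mem_weierstrassBall {v : EuclideanSpace ℝ (Fin n ⊕ Fin n)}
    (hv : ‖v‖ ≤ 1) : weierstrassBlock a b n v ∈ weierstrassBall a b := by
  refine mem_weierstrassBall_of_fin (fun k => v (.inl k)) (fun k => v (.inr k)) ?_ _ fun x => ?_
  · rw [← sq_le_one_iff₀ (norm_nonneg v), EuclideanSpace.norm_sq_eq, Fintype.sum_sum_type] at hv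
    simpa [Finset.sum_add_distrib] using hv
  · simp [weierstrassBlock, Fintype.sum_sum_type, weierstrassScale, weierstrassTrig,
      Finset.sum_add_distrib, mul_add, mul_assoc]

end WeierstrassBlock

theorem weierstrass_coveringNumber_lower_general
    (a : ℝ) (b : ℕ) (ha0 : 0 < a) (ha1 : a < 1) (hab : 1 ≤ a * b)
    (ε : ℝ) (hε : 0 < ε) (n : ℕ) :
    ENNReal.ofReal (a ^ (((n : ℝ) ^ 2) / 2) / (2 * ε ^ 2) ^ n) ≤
      (coveringNumber ε (weierstrassBall a b) : ℝ≥0∞) := by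
  have hb : 2 ≤ b := by exact_mod_cast (show (1 : ℝ) < b by nlinarith)
  let T := Matrix.toEuclideanLin (Matrix.diagonal (weierstrassScale a n))
  have hT : T '' closedBall 0 1 ⊆ weierstrassCoeffs b n '' weierstrassBall a b := by
    rintro _ ⟨v, hv, rfl⟩
    exact ⟨weierstrassBlock a b n v, weierstrassBlock_mem_weierstrassBall (by simpa using hv),
      weierstrassCoeffs_weierstrassBlock hb v⟩
  have hradius : ((NNReal.sqrt 2 : ℝ) * ε) ^ (n + n) = (2 * ε ^ 2) ^ n := by
    rw [← two_mul, pow_mul, Real.coe_sqrt, NNReal.coe_ofNat, mul_pow √2, Real.sq_sqrt zero_le_two]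
  have hdet : a ^ ((n : ℝ) ^ 2 / 2) / (2 * ε ^ 2) ^ n ≤
      |LinearMap.det T| / (NNReal.sqrt 2 * ε) ^ finrank ℝ (EuclideanSpace ℝ (Fin n ⊕ Fin n)) := by
    rw [Matrix.det_toEuclideanLin, Matrix.det_diagonal, finrank_euclideanSpace, Fintype.card_sum,
      Fintype.card_fin, hradius]
    gcongr
    exact (rpow_sq_div_two_le_prod_weierstrassScale ha0 ha1.le).trans (le_abs_self _)
  exact (ENNReal.ofReal_le_ofReal hdet).trans
    (ofReal_abs_det_div_le_coveringNumber (lipschitzWith_weierstrassCoeffs hb) hT hε.le)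

/-- For `0 < a < 1`, `b : ℕ` with `a * b ≥ 1`, every `ε > 0` and every
`n ≥ 1`, the covering number of the unit RKHS ball in `C([-1,1])` satisfies
`𝒞(ε, B_W) ≥ a^(n²/2) / (2ε²)^n`. -/
theorem weierstrass_coveringNumber_lower
    (a : ℝ) (b : ℕ) (ha0 : 0 < a) (ha1 : a < 1) (hab : 1 ≤ a * b)
    (ε : ℝ) (hε : 0 < ε) (n : ℕ) (hn : 1 ≤ n) :
    ENNReal.ofReal (a ^ (((n : ℝ) ^ 2) / 2) / (2 * ε ^ 2) ^ n) ≤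
      (coveringNumber ε (weierstrassBall a b) : ℝ≥0∞) :=
  weierstrass_coveringNumber_lower_general a b ha0 ha1 hab ε hε n
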